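/- For every n ∈ ℕ and x ∈ ℝ, the n-th iterate of the operator f ↦ (x·f − f') applied to the Gaussian e^{−x²/2} satisfies: ((x − d/dx)ⁿ e^{−x²/2})(x) = 2^{n/2} · He_n(√2·x) · e^{−x²/2}, where 2^{n/2}·He_n(√2·x) is the n-th physicist Hermite polynomial H_n(x). Equivalently, H_n(x) = e^{x²/2}·((x − d/dx)ⁿ e^{−x²/2})(x). -/

import Mathlib

/-- The operator `f ↦ (x·f − f')`, i.e. `√2 a†` up to normalization. -/
noncomputable def raiseOp (f : ℝ → ℝ) : ℝ → ℝ := fun x => x * f x - deriv f x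

/-- The `n`-th physicist Hermite polynomial `H_n(x) = 2^{n/2} He_n(√2 x)`,
where `He_n` is the probabilist Hermite polynomial. -/
noncomputable def physHermite (n : ℕ) (x : ℝ) : ℝ :=
  (2 : ℝ) ^ ((n : ℝ) / 2) * Polynomial.aeval (Real.sqrt 2 * x) (Polynomial.hermite n)

private noncomputable def hP (n : ℕ) : Polynomial ℝ :=
  (Polynomial.hermite n).map (algebraMap ℤ ℝ)

private lemma aeval_eq (n : ℕ) (u : ℝ) :
    Polynomial.aeval u (Polynomial.hermite n) = (hP n).eval u := by
  rw [hP, Polynomial.eval_map, Polynomial.aeval_def]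

private lemma hP_succ_eval (n : ℕ) (u : ℝ) :
    (hP (n+1)).eval u = u * (hP n).eval u - (hP n).derivative.eval u := by
  simp [hP, Polynomial.hermite_succ, Polynomial.derivative_map]

private lemma gauss_hasDerivAt (x : ℝ) :
    HasDerivAt (fun y : ℝ => Real.exp (-y ^ 2 / 2)) (-x * Real.exp (-x ^ 2 / 2)) x := by
  have h1 : HasDerivAt (fun y : ℝ => -y ^ 2 / 2) (-x) x := by
    have := ((hasDerivAt_pow 2 x).neg).div_const 2
    refine this.congr_deriv ?_
    norm_num
    ring
  have := h1.exp
  convert this using 1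
  ring

/-- Applying `(x − d/dx)` `n` times to the Gaussian `e^{−x²/2}`
produces `H_n(x) e^{−x²/2}` where `H_n` is the `n`-th physicist Hermite polynomial;
equivalently `H_n(x) = e^{x²/2} ((x − d/dx)ⁿ e^{−x²/2})(x)`. -/
theorem hermite_from_raising (n : ℕ) (x : ℝ) :
    (raiseOp^[n] (fun y => Real.exp (-y ^ 2 / 2))) x =
      physHermite n x * Real.exp (-x ^ 2 / 2) := by
  induction n generalizing x with
  | zero => simp [physHermite]
  | succ n ih =>
    rw [Function.iterate_succ_apply']
    have hfun : raiseOp^[n] (fun y => Real.exp (-y ^ 2 / 2)) =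
        fun y => physHermite n y * Real.exp (-y ^ 2 / 2) := funext ih
    rw [hfun, raiseOp]
    set c : ℝ := (2 : ℝ) ^ ((n : ℝ) / 2) with hc
    set s : ℝ := Real.sqrt 2 with hs
    have hderiv : HasDerivAt (fun y => physHermite n y * Real.exp (-y ^ 2 / 2))
        ((c * ((hP n).derivative.eval (s * x) * s)) * Real.exp (-x ^ 2 / 2)
          + physHermite n x * (-x * Real.exp (-x ^ 2 / 2))) x := by
      have hp : HasDerivAt (fun y : ℝ => physHermite n y)
          (c * ((hP n).derivative.eval (s * x) * s)) x := by
        have h1 : HasDerivAt (fun y : ℝ => s * y) s x := by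
          simpa using (hasDerivAt_id x).const_mul s
        have h2 := ((hP n).hasDerivAt (s * x)).comp x h1
        have h3 := h2.const_mul c
        simp only [physHermite, aeval_eq]
        exact h3
      exact hp.mul (gauss_hasDerivAt x)
    rw [hderiv.deriv]
    have hs2 : s * s = 2 := Real.mul_self_sqrt (by norm_num)
    have hcs : (2 : ℝ) ^ ((((n : ℕ) + 1 : ℕ) : ℝ) / 2) = c * s := by
      rw [hc, hs, Real.sqrt_eq_rpow, ← Real.rpow_add (by norm_num)]
      push_cast
      ring_nf
    simp only [physHermite, aeval_eq, hP_succ_eval, hcs]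
    linear_combination (-(x * c * (hP n).eval (s * x) * Real.exp (-x ^ 2 / 2))) * hs2
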